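/- arXiv:0902.2556 — 5 statements merged into one kernel-verified Lean document; each statement's English description precedes it below -/
import Mathlib

section
/- Suppose the Isaacs condition holds for f: for all s, x ∈ ℝⁿ, min_{u∈P} max_{v∈Q} ⟨s, f(x,u,v)⟩ = max_{v∈Q} min_{u∈P} ⟨s, f(x,u,v)⟩ (the minima and maxima are attained by compactness and continuity). Then the Isaacs condition holds for the transformed dynamics f*: for all s, x ∈ ℝⁿ, min_{(ν,u,ω)∈{0,1}×P×Ω} max_{v∈Q} ⟨s, ν·f(x,u,v) + (1−ν)·g(x,ω)⟩ = max_{v∈Q} min_{(ν,u,ω)∈{0,1}×P×Ω} ⟨s, ν·f(x,u,v) + (1−ν)·g(x,ω)⟩. -/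
open scoped RealInnerProductSpace

section Aux

lemma image_pair_prod {α β : Type*} (F : ℝ × α → β) (S : Set α) :
    F '' (({0, 1} : Set ℝ) ×ˢ S) = ((fun a => F (0, a)) '' S) ∪ ((fun a => F (1, a)) '' S) := by
  ext y
  simp only [Set.mem_image, Set.mem_prod, Set.mem_insert_iff, Set.mem_singleton_iff,
    Set.mem_union, Prod.exists]
  constructor
  · rintro ⟨ν, a, ⟨hν | hν, ha⟩, rfl⟩
    · exact Or.inl ⟨a, ha, by rw [hν]⟩
    · exact Or.inr ⟨a, ha, by rw [hν]⟩
  · rintro (⟨a, ha, rfl⟩ | ⟨a, ha, rfl⟩)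
    · exact ⟨0, a, ⟨Or.inl rfl, ha⟩, rfl⟩
    · exact ⟨1, a, ⟨Or.inr rfl, ha⟩, rfl⟩

lemma image_fst_prod {α β γ : Type*} (c : α → γ) {S : Set α} {T : Set β} (hT : T.Nonempty) :
    (fun z : α × β => c z.1) '' (S ×ˢ T) = c '' S := by
  obtain ⟨b, hb⟩ := hT
  ext y
  simp only [Set.mem_image, Set.mem_prod, Prod.exists]
  exact ⟨fun ⟨a, b', ⟨ha, _⟩, h⟩ => ⟨a, ha, h⟩, fun ⟨a, ha, h⟩ => ⟨a, b, ⟨ha, hb⟩, h⟩⟩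

lemma image_snd_prod {α β γ : Type*} (c : β → γ) {S : Set α} {T : Set β} (hS : S.Nonempty) :
    (fun z : α × β => c z.2) '' (S ×ˢ T) = c '' T := by
  obtain ⟨a, ha⟩ := hS
  ext y
  simp only [Set.mem_image, Set.mem_prod, Prod.exists]
  exact ⟨fun ⟨a', b, ⟨_, hb⟩, h⟩ => ⟨b, hb, h⟩, fun ⟨b, hb, h⟩ => ⟨a, b, ⟨ha, hb⟩, h⟩⟩

end Aux

/-- If the Isaacs condition holds for the dynamics `f`, then it holds for
the transformed dynamics `f*(x,(ν,u,ω),v) = ν•f(x,u,v) + (1-ν)•g(x,ω)` with first-player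
control set `P* = {0,1} × P × Ω`. -/
theorem isaacs_condition_transformed
    (n p q m : ℕ)
    (P : Set (EuclideanSpace ℝ (Fin p))) (Q : Set (EuclideanSpace ℝ (Fin q)))
    (Ω : Set (EuclideanSpace ℝ (Fin m)))
    (hPne : P.Nonempty) (hPc : IsCompact P)
    (hQne : Q.Nonempty) (hQc : IsCompact Q)
    (hΩne : Ω.Nonempty) (hΩc : IsCompact Ω)
    (f : EuclideanSpace ℝ (Fin n) → EuclideanSpace ℝ (Fin p) → EuclideanSpace ℝ (Fin q) →
      EuclideanSpace ℝ (Fin n))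
    (g : EuclideanSpace ℝ (Fin n) → EuclideanSpace ℝ (Fin m) → EuclideanSpace ℝ (Fin n))
    (hf : Continuous fun z : EuclideanSpace ℝ (Fin n) × EuclideanSpace ℝ (Fin p) ×
      EuclideanSpace ℝ (Fin q) => f z.1 z.2.1 z.2.2)
    (hg : Continuous fun z : EuclideanSpace ℝ (Fin n) × EuclideanSpace ℝ (Fin m) => g z.1 z.2)
    (hIsaacs : ∀ s x : EuclideanSpace ℝ (Fin n),
      sInf ((fun u => sSup ((fun v => ⟪s, f x u v⟫) '' Q)) '' P) =
        sSup ((fun v => sInf ((fun u => ⟪s, f x u v⟫) '' P)) '' Q)) :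
    ∀ s x : EuclideanSpace ℝ (Fin n),
      sInf ((fun w : ℝ × EuclideanSpace ℝ (Fin p) × EuclideanSpace ℝ (Fin m) =>
          sSup ((fun v => ⟪s, w.1 • f x w.2.1 v + (1 - w.1) • g x w.2.2⟫) '' Q)) ''
            (({0, 1} : Set ℝ) ×ˢ P ×ˢ Ω)) =
        sSup ((fun v => sInf ((fun w : ℝ × EuclideanSpace ℝ (Fin p) × EuclideanSpace ℝ (Fin m) =>
            ⟪s, w.1 • f x w.2.1 v + (1 - w.1) • g x w.2.2⟫) ''
              (({0, 1} : Set ℝ) ×ˢ P ×ˢ Ω))) '' Q) := by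
  intro s x
  obtain ⟨u₀, hu₀⟩ := hPne
  obtain ⟨v₀, hv₀⟩ := hQne
  have hPne : P.Nonempty := ⟨u₀, hu₀⟩
  have hQne : Q.Nonempty := ⟨v₀, hv₀⟩
  -- basic continuity facts
  have hfu : ∀ v, Continuous (fun u => (⟪s, f x u v⟫ : ℝ)) := fun v =>
    continuous_const.inner (hf.comp (continuous_const.prodMk
      (continuous_id.prodMk continuous_const)))
  have hfv : ∀ u, Continuous (fun v => (⟪s, f x u v⟫ : ℝ)) := fun u =>
    continuous_const.inner (hf.comp (continuous_const.prodMk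
      (continuous_const.prodMk continuous_id)))
  have hgc : Continuous (fun ω => (⟪s, g x ω⟫ : ℝ)) :=
    continuous_const.inner (hg.comp (continuous_const.prodMk continuous_id))
  -- basic boundedness facts
  have hbdQ : ∀ u, BddAbove ((fun v => (⟪s, f x u v⟫ : ℝ)) '' Q) := fun u =>
    (hQc.image (hfv u)).bddAbove
  have hbdP : ∀ v, BddBelow ((fun u => (⟪s, f x u v⟫ : ℝ)) '' P) := fun v =>
    (hPc.image (hfu v)).bddBelow
  set φ : EuclideanSpace ℝ (Fin p) → ℝ :=
    fun u => sSup ((fun v => (⟪s, f x u v⟫ : ℝ)) '' Q) with hφ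
  set ψ : EuclideanSpace ℝ (Fin q) → ℝ :=
    fun v => sInf ((fun u => (⟪s, f x u v⟫ : ℝ)) '' P) with hψ
  set B : ℝ := sInf ((fun ω => (⟪s, g x ω⟫ : ℝ)) '' Ω) with hB
  -- φ '' P is bounded below
  have hφbd : BddBelow (φ '' P) := by
    obtain ⟨c, hc⟩ := (hPc.image (hfu v₀)).bddBelow
    refine ⟨c, ?_⟩
    rintro y ⟨u, hu, rfl⟩
    exact le_trans (hc ⟨u, hu, rfl⟩) (le_csSup (hbdQ u) ⟨v₀, hv₀, rfl⟩)
  -- ψ '' Q is bounded above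
  have hψbd : BddAbove (ψ '' Q) := by
    obtain ⟨c, hc⟩ := (hQc.image (hfv u₀)).bddAbove
    refine ⟨c, ?_⟩
    rintro y ⟨v, hv, rfl⟩
    exact le_trans (csInf_le (hbdP v) ⟨u₀, hu₀, rfl⟩) (hc ⟨v, hv, rfl⟩)
  have hgbd : BddBelow ((fun ω => (⟪s, g x ω⟫ : ℝ)) '' Ω) := (hΩc.image hgc).bddBelow
  -- rewrite LHS
  have hPΩne : (P ×ˢ Ω).Nonempty := hPne.prod hΩne
  have hL : (fun w : ℝ × EuclideanSpace ℝ (Fin p) × EuclideanSpace ℝ (Fin m) =>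
        sSup ((fun v => ⟪s, w.1 • f x w.2.1 v + (1 - w.1) • g x w.2.2⟫) '' Q)) ''
          (({0, 1} : Set ℝ) ×ˢ P ×ˢ Ω) =
      ((fun ω => (⟪s, g x ω⟫ : ℝ)) '' Ω) ∪ (φ '' P) := by
    rw [image_pair_prod]
    congr 1
    · have : (fun a : EuclideanSpace ℝ (Fin p) × EuclideanSpace ℝ (Fin m) =>
          sSup ((fun v => ⟪s, (0:ℝ) • f x a.1 v + (1 - (0:ℝ)) • g x a.2⟫) '' Q)) =
          fun a => (⟪s, g x a.2⟫ : ℝ) := by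
        funext a
        simp only [zero_smul, sub_zero, one_smul, zero_add]
        rw [Set.Nonempty.image_const hQne, csSup_singleton]
      rw [this]; exact image_snd_prod (fun ω => (⟪s, g x ω⟫ : ℝ)) hPne
    · have : (fun a : EuclideanSpace ℝ (Fin p) × EuclideanSpace ℝ (Fin m) =>
          sSup ((fun v => ⟪s, (1:ℝ) • f x a.1 v + (1 - (1:ℝ)) • g x a.2⟫) '' Q)) =
          fun a => φ a.1 := by
        funext a
        simp only [one_smul, sub_self, zero_smul, add_zero, hφ]
      rw [this]; exact image_fst_prod φ hΩne
  -- rewrite inner sets on RHS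
  have hR : ∀ v, (fun w : ℝ × EuclideanSpace ℝ (Fin p) × EuclideanSpace ℝ (Fin m) =>
        (⟪s, w.1 • f x w.2.1 v + (1 - w.1) • g x w.2.2⟫ : ℝ)) ''
          (({0, 1} : Set ℝ) ×ˢ P ×ˢ Ω) =
      ((fun ω => (⟪s, g x ω⟫ : ℝ)) '' Ω) ∪ ((fun u => (⟪s, f x u v⟫ : ℝ)) '' P) := by
    intro v
    rw [image_pair_prod]
    congr 1
    · have : (fun a : EuclideanSpace ℝ (Fin p) × EuclideanSpace ℝ (Fin m) =>
          (⟪s, (0:ℝ) • f x a.1 v + (1 - (0:ℝ)) • g x a.2⟫ : ℝ)) =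
          fun a => (⟪s, g x a.2⟫ : ℝ) := by
        funext a; simp [zero_smul, sub_zero, one_smul, zero_add]
      rw [this]; exact image_snd_prod (fun ω => (⟪s, g x ω⟫ : ℝ)) hPne
    · have : (fun a : EuclideanSpace ℝ (Fin p) × EuclideanSpace ℝ (Fin m) =>
          (⟪s, (1:ℝ) • f x a.1 v + (1 - (1:ℝ)) • g x a.2⟫ : ℝ)) =
          fun a => (⟪s, f x a.1 v⟫ : ℝ) := by
        funext a; simp [one_smul, sub_self, zero_smul, add_zero]
      rw [this]; exact image_fst_prod (fun u => (⟪s, f x u v⟫ : ℝ)) hΩne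
  rw [hL, csInf_union hgbd (hΩne.image _) hφbd (hPne.image _)]
  have hinner : (fun v => sInf ((fun w : ℝ × EuclideanSpace ℝ (Fin p) ×
      EuclideanSpace ℝ (Fin m) =>
        (⟪s, w.1 • f x w.2.1 v + (1 - w.1) • g x w.2.2⟫ : ℝ)) ''
          (({0, 1} : Set ℝ) ×ˢ P ×ˢ Ω))) = fun v => B ⊓ ψ v := by
    funext v
    rw [hR v, csInf_union hgbd (hΩne.image _) (hbdP v) (hPne.image _)]
  rw [hinner]
  -- now compute: sSup ((fun v => B ⊓ ψ v) '' Q) = B ⊓ sSup (ψ '' Q)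
  have hmin : (fun v => B ⊓ ψ v) '' Q = (fun y => B ⊓ y) '' (ψ '' Q) := by
    rw [Set.image_image]
  have hmono : Monotone (fun y : ℝ => B ⊓ y) := fun a b hab => inf_le_inf_left B hab
  have hcont : ContinuousAt (fun y : ℝ => B ⊓ y) (sSup (ψ '' Q)) :=
    (continuous_const.min continuous_id).continuousAt
  have := Monotone.map_csSup_of_continuousAt hcont hmono (hQne.image ψ) hψbd
  rw [hmin, ← this, ← hB, hφ, hψ, hIsaacs s x]
end

section
/- Fix s, x ∈ ℝⁿ. Suppose min_{u∈P} max_{v∈Q} ⟨s, f(x,u,v)⟩ = max_{v∈Q} min_{u∈P} ⟨s, f(x,u,v)⟩ and min_{u∈P} max_{v∈Q} ⟨s, f(x,u,v)⟩ ≤ min_{ω∈Ω} ⟨s, g(x,ω)⟩. Then min_{(ν,u,ω)∈{0,1}×P×Ω} max_{v∈Q} ⟨s, f*(x,(ν,u,ω),v)⟩ ≤ max_{v∈Q} min_{(ν,u,ω)∈{0,1}×P×Ω} ⟨s, f*(x,(ν,u,ω),v)⟩. -/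
open scoped RealInnerProductSpace

set_option maxHeartbeats 1000000 in
/-- First case in the proof of the Isaacs condition for the transformed
dynamics: if the Isaacs condition holds for `f` at `(s, x)` and
`min_{u∈P} max_{v∈Q} ⟨s, f(x,u,v)⟩ ≤ min_{ω∈Ω} ⟨s, g(x,ω)⟩`, then
`min_{P*} max_{Q} ⟨s, f*⟩ ≤ max_{Q} min_{P*} ⟨s, f*⟩`. -/
theorem isaacs_transformed_case_one
    (n p q m : ℕ)
    (P : Set (EuclideanSpace ℝ (Fin p))) (Q : Set (EuclideanSpace ℝ (Fin q)))
    (Ω : Set (EuclideanSpace ℝ (Fin m)))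
    (hPne : P.Nonempty) (hPc : IsCompact P)
    (hQne : Q.Nonempty) (hQc : IsCompact Q)
    (hΩne : Ω.Nonempty) (hΩc : IsCompact Ω)
    (f : EuclideanSpace ℝ (Fin n) → EuclideanSpace ℝ (Fin p) → EuclideanSpace ℝ (Fin q) →
      EuclideanSpace ℝ (Fin n))
    (g : EuclideanSpace ℝ (Fin n) → EuclideanSpace ℝ (Fin m) → EuclideanSpace ℝ (Fin n))
    (hf : Continuous fun z : EuclideanSpace ℝ (Fin n) × EuclideanSpace ℝ (Fin p) ×
      EuclideanSpace ℝ (Fin q) => f z.1 z.2.1 z.2.2)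
    (hg : Continuous fun z : EuclideanSpace ℝ (Fin n) × EuclideanSpace ℝ (Fin m) => g z.1 z.2)
    (s x : EuclideanSpace ℝ (Fin n))
    (hIsaacs : sInf ((fun u => sSup ((fun v => ⟪s, f x u v⟫) '' Q)) '' P) =
      sSup ((fun v => sInf ((fun u => ⟪s, f x u v⟫) '' P)) '' Q))
    (hle : sInf ((fun u => sSup ((fun v => ⟪s, f x u v⟫) '' Q)) '' P) ≤
      sInf ((fun ω => ⟪s, g x ω⟫) '' Ω)) :
    sInf ((fun w : ℝ × EuclideanSpace ℝ (Fin p) × EuclideanSpace ℝ (Fin m) =>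
        sSup ((fun v => ⟪s, w.1 • f x w.2.1 v + (1 - w.1) • g x w.2.2⟫) '' Q)) ''
          (({0, 1} : Set ℝ) ×ˢ P ×ˢ Ω)) ≤
      sSup ((fun v => sInf ((fun w : ℝ × EuclideanSpace ℝ (Fin p) × EuclideanSpace ℝ (Fin m) =>
          ⟪s, w.1 • f x w.2.1 v + (1 - w.1) • g x w.2.2⟫) ''
            (({0, 1} : Set ℝ) ×ˢ P ×ˢ Ω))) '' Q) := by
  classical
  obtain ⟨v0, hv0⟩ := hQne
  obtain ⟨ω0, hω0⟩ := hΩne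
  obtain ⟨u1, hu1⟩ := hPne
  -- basic continuity facts
  have hgc : Continuous fun ω => ⟪s, g x ω⟫ :=
    continuous_const.inner (hg.comp (continuous_const.prodMk continuous_id))
  have hfc : ∀ v, Continuous fun u => ⟪s, f x u v⟫ := fun v =>
    continuous_const.inner (hf.comp (continuous_const.prodMk
      (continuous_id.prodMk continuous_const)))
  have hfcv : ∀ u, Continuous fun v => ⟪s, f x u v⟫ := fun u =>
    continuous_const.inner (hf.comp (continuous_const.prodMk
      (continuous_const.prodMk continuous_id)))
  -- compactness of P*
  have h01 : IsCompact ({0, 1} : Set ℝ) :=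
    ((Set.finite_singleton (1:ℝ)).insert 0).isCompact
  have hPstarc : IsCompact (({0, 1} : Set ℝ) ×ˢ P ×ˢ Ω) := h01.prod (hPc.prod hΩc)
  set S := sInf ((fun u => sSup ((fun v => ⟪s, f x u v⟫) '' Q)) '' P) with hS
  set c := sInf ((fun ω => ⟪s, g x ω⟫) '' Ω) with hc
  set G : (ℝ × EuclideanSpace ℝ (Fin p) × EuclideanSpace ℝ (Fin m)) →
      EuclideanSpace ℝ (Fin q) → ℝ :=
    fun w v => ⟪s, w.1 • f x w.2.1 v + (1 - w.1) • g x w.2.2⟫ with hG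
  have hGc : Continuous fun z : (ℝ × EuclideanSpace ℝ (Fin p) ×
      EuclideanSpace ℝ (Fin m)) × EuclideanSpace ℝ (Fin q) => G z.1 z.2 := by
    apply continuous_const.inner
    exact ((continuous_fst.fst).smul
        (hf.comp (continuous_const.prodMk
          ((continuous_fst.snd.fst).prodMk continuous_snd)))).add
      ((continuous_const.sub continuous_fst.fst).smul
        (hg.comp (continuous_const.prodMk continuous_fst.snd.snd)))
  have hGcw : ∀ w, Continuous fun v => G w v := fun w =>
    hGc.comp (continuous_const.prodMk continuous_id)
  have hGcv : ∀ v, Continuous fun w => G w v := fun v =>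
    hGc.comp (continuous_id.prodMk continuous_const)
  set mm : EuclideanSpace ℝ (Fin q) → ℝ :=
    fun v => sInf ((fun u => ⟪s, f x u v⟫) '' P) with hmm
  -- simplifications of G at ν = 0, 1
  have hG1 : ∀ u ω v, G (1, u, ω) v = ⟪s, f x u v⟫ := by
    intro u ω v; simp [hG]
  have hG0 : ∀ u ω v, G (0, u, ω) v = ⟪s, g x ω⟫ := by
    intro u ω v; simp [hG]
  have h1mem : ∀ {u ω}, u ∈ P → ω ∈ Ω →
      ((1 : ℝ), u, ω) ∈ (({0, 1} : Set ℝ) ×ˢ P ×ˢ Ω) := by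
    intro u ω hu hω; exact ⟨by simp, hu, hω⟩
  have h0mem : ∀ {u ω}, u ∈ P → ω ∈ Ω →
      ((0 : ℝ), u, ω) ∈ (({0, 1} : Set ℝ) ×ˢ P ×ˢ Ω) := by
    intro u ω hu hω; exact ⟨by simp, hu, hω⟩
  -- BddBelow of the LHS index set
  obtain ⟨D, hD⟩ : BddBelow ((fun w => G w v0) '' (({0, 1} : Set ℝ) ×ˢ P ×ˢ Ω)) :=
    (hPstarc.image (hGcv v0)).bddBelow
  have hbddQ : ∀ w, BddAbove ((fun v => G w v) '' Q) := fun w =>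
    (hQc.image (hGcw w)).bddAbove
  have hLbdd : BddBelow ((fun w => sSup ((fun v => G w v) '' Q)) ''
      (({0, 1} : Set ℝ) ×ˢ P ×ˢ Ω)) := by
    refine ⟨D, ?_⟩
    rintro y ⟨w, hw, rfl⟩
    exact le_trans (hD ⟨w, hw, rfl⟩) (le_csSup (hbddQ w) ⟨v0, hv0, rfl⟩)
  -- Step A : LHS ≤ S
  have stepA : sInf ((fun w => sSup ((fun v => G w v) '' Q)) ''
      (({0, 1} : Set ℝ) ×ˢ P ×ˢ Ω)) ≤ S := by
    rw [hS]
    refine le_csInf ⟨_, u1, hu1, rfl⟩ ?_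
    rintro b ⟨u, hu, rfl⟩
    have : (fun v => G ((1 : ℝ), u, ω0) v) = fun v => ⟪s, f x u v⟫ := by
      funext v; exact hG1 u ω0 v
    calc sInf ((fun w => sSup ((fun v => G w v) '' Q)) ''
          (({0, 1} : Set ℝ) ×ˢ P ×ˢ Ω))
        ≤ sSup ((fun v => G ((1 : ℝ), u, ω0) v) '' Q) :=
          csInf_le hLbdd ⟨((1:ℝ), u, ω0), h1mem hu hω0, rfl⟩
      _ = sSup ((fun v => ⟪s, f x u v⟫) '' Q) := by rw [this]
  -- mm v ≤ c for v ∈ Q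
  have hmmle : ∀ v ∈ Q, mm v ≤ c := by
    intro v hv
    have hbddmm : BddAbove (mm '' Q) := by
      obtain ⟨C, hC⟩ := (hQc.image (hfcv u1)).bddAbove
      refine ⟨C, ?_⟩
      rintro y ⟨v, hv', rfl⟩
      exact le_trans (csInf_le (hPc.image (hfc v)).bddBelow ⟨u1, hu1, rfl⟩)
        (hC ⟨v, hv', rfl⟩)
    have h1 : mm v ≤ sSup (mm '' Q) := le_csSup hbddmm ⟨v, hv, rfl⟩
    have h2 : sSup (mm '' Q) = S := hIsaacs.symm
    linarith [hle]
  -- Step B : the inner inf over P* equals mm v for v ∈ Q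
  have stepB : ∀ v ∈ Q,
      sInf ((fun w => G w v) '' (({0, 1} : Set ℝ) ×ˢ P ×ˢ Ω)) = mm v := by
    intro v hv
    have himg : (fun w => G w v) '' (({0, 1} : Set ℝ) ×ˢ P ×ˢ Ω) =
        ((fun ω => ⟪s, g x ω⟫) '' Ω) ∪ ((fun u => ⟪s, f x u v⟫) '' P) := by
      ext y
      constructor
      · rintro ⟨⟨ν, u, ω⟩, ⟨hν, hu, hω⟩, rfl⟩
        rcases hν with hν | hν
        · subst hν; left; exact ⟨ω, hω, (hG0 u ω v).symm⟩
        · simp only [Set.mem_singleton_iff] at hν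
          subst hν; right; exact ⟨u, hu, (hG1 u ω v).symm⟩
      · rintro (⟨ω, hω, rfl⟩ | ⟨u, hu, rfl⟩)
        · exact ⟨((0:ℝ), u1, ω), h0mem hu1 hω, hG0 u1 ω v⟩
        · exact ⟨((1:ℝ), u, ω0), h1mem hu hω0, hG1 u ω0 v⟩
    rw [himg, csInf_union (hΩc.image hgc).bddBelow ⟨_, ω0, hω0, rfl⟩
      (hPc.image (hfc v)).bddBelow ⟨_, u1, hu1, rfl⟩]
    exact inf_eq_right.mpr (hmmle v hv)
  -- conclude
  have himg2 : (fun v => sInf ((fun w => G w v) ''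
      (({0, 1} : Set ℝ) ×ˢ P ×ˢ Ω))) '' Q = mm '' Q := by
    apply Set.image_congr
    intro v hv; exact stepB v hv
  calc sInf ((fun w => sSup ((fun v => G w v) '' Q)) ''
        (({0, 1} : Set ℝ) ×ˢ P ×ˢ Ω)) ≤ S := stepA
    _ = sSup (mm '' Q) := hIsaacs
    _ = sSup ((fun v => sInf ((fun w => G w v) ''
        (({0, 1} : Set ℝ) ×ˢ P ×ˢ Ω))) '' Q) := by rw [himg2]
end

section
/- Fix s, x ∈ ℝⁿ. Suppose min_{u∈P} max_{v∈Q} ⟨s, f(x,u,v)⟩ = max_{v∈Q} min_{u∈P} ⟨s, f(x,u,v)⟩ and min_{ω∈Ω} ⟨s, g(x,ω)⟩ ≤ min_{u∈P} max_{v∈Q} ⟨s, f(x,u,v)⟩. Then min_{(ν,u,ω)∈{0,1}×P×Ω} max_{v∈Q} ⟨s, f*(x,(ν,u,ω),v)⟩ ≤ max_{v∈Q} min_{(ν,u,ω)∈{0,1}×P×Ω} ⟨s, f*(x,(ν,u,ω),v)⟩. -/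
open scoped RealInnerProductSpace

/-- Second case in the proof of the Isaacs condition for the transformed
dynamics: if the Isaacs condition holds for `f` at `(s, x)` and
`min_{u∈P} max_{v∈Q} ⟨s, f(x,u,v)⟩ ≤ min_{ω∈Ω} ⟨s, g(x,ω)⟩`, then
`min_{P*} max_{Q} ⟨s, f*⟩ ≤ max_{Q} min_{P*} ⟨s, f*⟩`. -/
theorem isaacs_transformed_case_two
    (n p q m : ℕ)
    (P : Set (EuclideanSpace ℝ (Fin p))) (Q : Set (EuclideanSpace ℝ (Fin q)))
    (Ω : Set (EuclideanSpace ℝ (Fin m)))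
    (hPne : P.Nonempty) (hPc : IsCompact P)
    (hQne : Q.Nonempty) (hQc : IsCompact Q)
    (hΩne : Ω.Nonempty) (hΩc : IsCompact Ω)
    (f : EuclideanSpace ℝ (Fin n) → EuclideanSpace ℝ (Fin p) → EuclideanSpace ℝ (Fin q) →
      EuclideanSpace ℝ (Fin n))
    (g : EuclideanSpace ℝ (Fin n) → EuclideanSpace ℝ (Fin m) → EuclideanSpace ℝ (Fin n))
    (hf : Continuous fun z : EuclideanSpace ℝ (Fin n) × EuclideanSpace ℝ (Fin p) ×
      EuclideanSpace ℝ (Fin q) => f z.1 z.2.1 z.2.2)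
    (hg : Continuous fun z : EuclideanSpace ℝ (Fin n) × EuclideanSpace ℝ (Fin m) => g z.1 z.2)
    (s x : EuclideanSpace ℝ (Fin n))
    (hIsaacs : sInf ((fun u => sSup ((fun v => ⟪s, f x u v⟫) '' Q)) '' P) =
      sSup ((fun v => sInf ((fun u => ⟪s, f x u v⟫) '' P)) '' Q))
    (hle : sInf ((fun ω => ⟪s, g x ω⟫) '' Ω) ≤
      sInf ((fun u => sSup ((fun v => ⟪s, f x u v⟫) '' Q)) '' P)) :
    sInf ((fun w : ℝ × EuclideanSpace ℝ (Fin p) × EuclideanSpace ℝ (Fin m) =>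
        sSup ((fun v => ⟪s, w.1 • f x w.2.1 v + (1 - w.1) • g x w.2.2⟫) '' Q)) ''
          (({0, 1} : Set ℝ) ×ˢ P ×ˢ Ω)) ≤
      sSup ((fun v => sInf ((fun w : ℝ × EuclideanSpace ℝ (Fin p) × EuclideanSpace ℝ (Fin m) =>
          ⟪s, w.1 • f x w.2.1 v + (1 - w.1) • g x w.2.2⟫) ''
            (({0, 1} : Set ℝ) ×ˢ P ×ˢ Ω))) '' Q) := by
  obtain ⟨u₀, hu₀⟩ := hPne
  obtain ⟨v₀, hv₀⟩ := hQne
  obtain ⟨ω₀, hω₀⟩ := hΩne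
  have hFcont : Continuous fun uv : EuclideanSpace ℝ (Fin p) × EuclideanSpace ℝ (Fin q) =>
      ⟪s, f x uv.1 uv.2⟫ :=
    continuous_const.inner (hf.comp (continuous_const.prodMk continuous_id))
  have hGcont : Continuous fun ω : EuclideanSpace ℝ (Fin m) => ⟪s, g x ω⟫ :=
    continuous_const.inner (hg.comp (continuous_const.prodMk continuous_id))
  obtain ⟨c, hc⟩ := ((hPc.prod hQc).image hFcont).bddBelow
  obtain ⟨C, hC⟩ := ((hPc.prod hQc).image hFcont).bddAbove
  obtain ⟨d, hd⟩ := (hΩc.image hGcont).bddBelow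
  obtain ⟨D, hD⟩ := (hΩc.image hGcont).bddAbove
  have hFc : ∀ u ∈ P, ∀ v ∈ Q, c ≤ ⟪s, f x u v⟫ := fun u hu v hv =>
    hc ⟨(u, v), ⟨hu, hv⟩, rfl⟩
  have hFC : ∀ u ∈ P, ∀ v ∈ Q, ⟪s, f x u v⟫ ≤ C := fun u hu v hv =>
    hC ⟨(u, v), ⟨hu, hv⟩, rfl⟩
  have hGd : ∀ ω ∈ Ω, d ≤ ⟪s, g x ω⟫ := fun ω hω => hd ⟨ω, hω, rfl⟩
  have hGD : ∀ ω ∈ Ω, ⟪s, g x ω⟫ ≤ D := fun ω hω => hD ⟨ω, hω, rfl⟩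
  have hcolBdd : ∀ v ∈ Q, BddBelow ((fun u => ⟪s, f x u v⟫) '' P) := fun v hv =>
    ⟨c, by rintro y ⟨u, hu, rfl⟩; exact hFc u hu v hv⟩
  -- lower bound on inner w-images
  have hwLB : ∀ v ∈ Q, ∀ y ∈ (fun w : ℝ × EuclideanSpace ℝ (Fin p) × EuclideanSpace ℝ (Fin m) =>
      ⟪s, w.1 • f x w.2.1 v + (1 - w.1) • g x w.2.2⟫) '' (({0, 1} : Set ℝ) ×ˢ P ×ˢ Ω),
      min c d ≤ y := by
    rintro v hv y ⟨⟨ν, u, ω⟩, ⟨hν, hu, hω⟩, rfl⟩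
    rcases hν with rfl | rfl
    · simpa using le_trans (min_le_right c d) (hGd ω hω)
    · simpa using le_trans (min_le_left c d) (hFc u hu v hv)
  have hvBddAbove : ∀ w ∈ (({0, 1} : Set ℝ) ×ˢ P ×ˢ Ω),
      BddAbove ((fun v => ⟪s, w.1 • f x w.2.1 v + (1 - w.1) • g x w.2.2⟫) '' Q) := by
    rintro ⟨ν, u, ω⟩ ⟨hν, hu, hω⟩
    refine ⟨max C D, ?_⟩
    rintro y ⟨v, hv, rfl⟩
    rcases hν with rfl | rfl
    · simpa using le_trans (hGD ω hω) (le_max_right C D)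
    · simpa using le_trans (hFC u hu v hv) (le_max_left C D)
  have hLHSbdd : BddBelow ((fun w : ℝ × EuclideanSpace ℝ (Fin p) × EuclideanSpace ℝ (Fin m) =>
      sSup ((fun v => ⟪s, w.1 • f x w.2.1 v + (1 - w.1) • g x w.2.2⟫) '' Q)) ''
        (({0, 1} : Set ℝ) ×ˢ P ×ˢ Ω)) := by
    refine ⟨min c d, ?_⟩
    rintro y ⟨w, hw, rfl⟩
    exact le_trans (hwLB v₀ hv₀ _ (Set.mem_image_of_mem _ hw))
      (le_csSup (hvBddAbove w hw) (Set.mem_image_of_mem _ hv₀))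
  -- value of the outer function at ν = 0
  have hval0 : ∀ u ω, (fun w : ℝ × EuclideanSpace ℝ (Fin p) × EuclideanSpace ℝ (Fin m) =>
      sSup ((fun v => ⟪s, w.1 • f x w.2.1 v + (1 - w.1) • g x w.2.2⟫) '' Q)) (0, u, ω)
      = ⟪s, g x ω⟫ := by
    intro u ω
    have : (fun v : EuclideanSpace ℝ (Fin q) =>
        ⟪s, (0 : ℝ) • f x u v + (1 - (0 : ℝ)) • g x ω⟫) = fun _ => ⟪s, g x ω⟫ := by
      funext v; simp
    simp only [this]
    rw [Set.Nonempty.image_const ⟨v₀, hv₀⟩, csSup_singleton]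
  -- Part 1 : LHS ≤ min_Ω ⟨s, g⟩
  have part1 : sInf ((fun w : ℝ × EuclideanSpace ℝ (Fin p) × EuclideanSpace ℝ (Fin m) =>
      sSup ((fun v => ⟪s, w.1 • f x w.2.1 v + (1 - w.1) • g x w.2.2⟫) '' Q)) ''
        (({0, 1} : Set ℝ) ×ˢ P ×ˢ Ω)) ≤ sInf ((fun ω => ⟪s, g x ω⟫) '' Ω) := by
    refine le_csInf ⟨_, Set.mem_image_of_mem _ hω₀⟩ ?_
    rintro b ⟨ω, hω, rfl⟩
    have hmem : ((0 : ℝ), u₀, ω) ∈ (({0, 1} : Set ℝ) ×ˢ P ×ˢ Ω) := ⟨Or.inl rfl, hu₀, hω⟩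
    calc sInf _ ≤ _ := csInf_le hLHSbdd (Set.mem_image_of_mem _ hmem)
      _ = ⟪s, g x ω⟫ := hval0 u₀ ω
  -- Part 2 : min_Ω ⟨s, g⟩ ≤ RHS
  have part2 : sInf ((fun ω => ⟪s, g x ω⟫) '' Ω) ≤
      sSup ((fun v => sInf ((fun w : ℝ × EuclideanSpace ℝ (Fin p) × EuclideanSpace ℝ (Fin m) =>
        ⟪s, w.1 • f x w.2.1 v + (1 - w.1) • g x w.2.2⟫) ''
          (({0, 1} : Set ℝ) ×ˢ P ×ˢ Ω))) '' Q) := by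
    rw [hIsaacs] at hle
    refine le_of_forall_pos_le_add ?_
    intro ε hε
    have hlt : sSup ((fun v => sInf ((fun u => ⟪s, f x u v⟫) '' P)) '' Q) - ε <
        sSup ((fun v => sInf ((fun u => ⟪s, f x u v⟫) '' P)) '' Q) := by linarith
    obtain ⟨b, hb, hby⟩ := exists_lt_of_lt_csSup ⟨_, Set.mem_image_of_mem _ hv₀⟩ hlt
    obtain ⟨v, hv, rfl⟩ := hb
    have hG_le : sInf ((fun ω => ⟪s, g x ω⟫) '' Ω) - ε ≤
        sInf ((fun w : ℝ × EuclideanSpace ℝ (Fin p) × EuclideanSpace ℝ (Fin m) =>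
          ⟪s, w.1 • f x w.2.1 v + (1 - w.1) • g x w.2.2⟫) ''
            (({0, 1} : Set ℝ) ×ˢ P ×ˢ Ω)) := by
      refine le_csInf ⟨_, Set.mem_image_of_mem _
        (⟨Or.inl rfl, hu₀, hω₀⟩ : ((0 : ℝ), u₀, ω₀) ∈ (({0, 1} : Set ℝ) ×ˢ P ×ˢ Ω))⟩ ?_
      rintro b ⟨⟨ν, u, ω⟩, ⟨hν, hu, hω⟩, rfl⟩
      rcases hν with rfl | rfl
      · have h0 : sInf ((fun ω => ⟪s, g x ω⟫) '' Ω) ≤ ⟪s, g x ω⟫ :=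
          csInf_le ⟨d, hd⟩ ⟨ω, hω, rfl⟩
        simp only [zero_smul, sub_zero, one_smul, zero_add]
        linarith
      · have h1 : sInf ((fun u => ⟪s, f x u v⟫) '' P) ≤ ⟪s, f x u v⟫ :=
          csInf_le (hcolBdd v hv) ⟨u, hu, rfl⟩
        simp only [one_smul, sub_self, zero_smul, add_zero]
        linarith
    have hRHSbdd : BddAbove ((fun v =>
        sInf ((fun w : ℝ × EuclideanSpace ℝ (Fin p) × EuclideanSpace ℝ (Fin m) =>
          ⟪s, w.1 • f x w.2.1 v + (1 - w.1) • g x w.2.2⟫) ''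
            (({0, 1} : Set ℝ) ×ˢ P ×ˢ Ω))) '' Q) := by
      refine ⟨D, ?_⟩
      rintro y ⟨v', hv', rfl⟩
      have hbb : BddBelow ((fun w : ℝ × EuclideanSpace ℝ (Fin p) × EuclideanSpace ℝ (Fin m) =>
          ⟪s, w.1 • f x w.2.1 v' + (1 - w.1) • g x w.2.2⟫) ''
            (({0, 1} : Set ℝ) ×ˢ P ×ˢ Ω)) := ⟨min c d, fun y hy => hwLB v' hv' y hy⟩
      have h0 := csInf_le hbb
        (Set.mem_image_of_mem _ (⟨Or.inl rfl, hu₀, hω₀⟩ : ((0 : ℝ), u₀, ω₀) ∈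
          (({0, 1} : Set ℝ) ×ˢ P ×ˢ Ω)))
      simp only [zero_smul, sub_zero, one_smul, zero_add] at h0
      exact h0.trans (hGD ω₀ hω₀)
    have hfin := le_csSup hRHSbdd (Set.mem_image_of_mem _ hv)
    linarith
  exact part1.trans part2
end

section
/- Let E ⊆ [0,ϑ] × ℝⁿ be closed. If M ⊆ E and E decreases by sections relative to the control system ẋ = g(x,ω), ω ∈ Ω, then M ⊆ A*(E) and A*(E) decreases by sections relative to ẋ = g(x,ω), ω ∈ Ω. -/
open MeasureTheory

noncomputable section

/-- A slide control on `[0,ϑ] × Λ`: a Borel measure on `ℝ × C` carried by `[0,ϑ] × Λ`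
whose marginal on the time axis is Lebesgue measure on `[0,ϑ]`. -/
def IsSlideControl {C : Type*} [MeasurableSpace C] (ϑ : ℝ) (Λ : Set C)
    (μ : Measure (ℝ × C)) : Prop :=
  μ.map Prod.fst = volume.restrict (Set.Icc 0 ϑ) ∧ μ ((Set.Icc 0 ϑ ×ˢ Λ)ᶜ) = 0

/-- A motion of `ẋ = h(x,b)` generated by the slide control `μ` from the position
`(t₀, x₀)`. -/
def IsMotion {C : Type*} {n : ℕ} [MeasurableSpace C] (ϑ : ℝ) (Λ : Set C)
    (h : EuclideanSpace ℝ (Fin n) → C → EuclideanSpace ℝ (Fin n))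
    (μ : Measure (ℝ × C)) (t₀ : ℝ) (x₀ : EuclideanSpace ℝ (Fin n))
    (x : ℝ → EuclideanSpace ℝ (Fin n)) : Prop :=
  ContinuousOn x (Set.Icc 0 ϑ) ∧ x t₀ = x₀ ∧
  (∀ t ∈ Set.Icc 0 ϑ, t₀ ≤ t →
    x t = x₀ + ∫ z in Set.Icc t₀ t ×ˢ Λ, h (x z.1) z.2 ∂μ) ∧
  (∀ t ∈ Set.Icc 0 ϑ, t ≤ t₀ →
    x t = x₀ - ∫ z in Set.Icc t t₀ ×ˢ Λ, h (x z.1) z.2 ∂μ)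

/-- `E` decreases by sections relative to the control system `ẋ = g(x,ω)`, `ω ∈ Ω`. -/
def DecreasesBySections {n m : ℕ} (ϑ : ℝ) (Ω : Set (EuclideanSpace ℝ (Fin m)))
    (g : EuclideanSpace ℝ (Fin n) → EuclideanSpace ℝ (Fin m) → EuclideanSpace ℝ (Fin n))
    (E : Set (ℝ × EuclideanSpace ℝ (Fin n))) : Prop :=
  ∀ tstar xstar, (tstar, xstar) ∈ E → ∀ t ∈ Set.Icc 0 tstar,
    ∀ σ : Measure (ℝ × EuclideanSpace ℝ (Fin m)), IsSlideControl ϑ Ω σ →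
      ∀ y : ℝ → EuclideanSpace ℝ (Fin n), IsMotion ϑ Ω g σ tstar xstar y → (t, y t) ∈ E

/-- The program absorption operator `A*` of the transformed game `ẋ = f*(x,(ν,u,ω),v)`,
`(ν,u,ω) ∈ P* = {0,1} × P × Ω`, with target set `{ϑ} × F`. -/
def progAbsorbStar {n p q m : ℕ} (ϑ : ℝ)
    (P : Set (EuclideanSpace ℝ (Fin p))) (Q : Set (EuclideanSpace ℝ (Fin q)))
    (Ω : Set (EuclideanSpace ℝ (Fin m)))
    (f : EuclideanSpace ℝ (Fin n) → EuclideanSpace ℝ (Fin p) → EuclideanSpace ℝ (Fin q) →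
      EuclideanSpace ℝ (Fin n))
    (g : EuclideanSpace ℝ (Fin n) → EuclideanSpace ℝ (Fin m) → EuclideanSpace ℝ (Fin n))
    (F : Set (EuclideanSpace ℝ (Fin n))) (E : Set (ℝ × EuclideanSpace ℝ (Fin n))) :
    Set (ℝ × EuclideanSpace ℝ (Fin n)) :=
  {pt ∈ E | ∀ v ∈ Q,
    ∃ μ : Measure (ℝ × (ℝ × EuclideanSpace ℝ (Fin p) × EuclideanSpace ℝ (Fin m))),
      IsSlideControl ϑ (({0, 1} : Set ℝ) ×ˢ P ×ˢ Ω) μ ∧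
      ∃ y : ℝ → EuclideanSpace ℝ (Fin n),
        IsMotion ϑ (({0, 1} : Set ℝ) ×ˢ P ×ˢ Ω)
          (fun x ustar => ustar.1 • f x ustar.2.1 v + (1 - ustar.1) • g x ustar.2.2)
          μ pt.1 pt.2 y ∧
        y ϑ ∈ F ∧ ∀ t ∈ Set.Icc pt.1 ϑ, (t, y t) ∈ E}

namespace SlideAux

open MeasureTheory

abbrev Vec (k : ℕ) := EuclideanSpace ℝ (Fin k)

variable {C : Type*} [MeasurableSpace C] {n : ℕ} {ϑ : ℝ} {Λ : Set C}
  {μ : Measure (ℝ × C)}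

theorem finite (hμ : IsSlideControl ϑ Λ μ) : IsFiniteMeasure μ := by
  constructor
  have h1 : μ Set.univ = μ.map Prod.fst Set.univ := by
    rw [Measure.map_apply measurable_fst MeasurableSet.univ, Set.preimage_univ]
  rw [h1, hμ.1, Measure.restrict_apply_univ, Real.volume_Icc]
  exact ENNReal.ofReal_lt_top

theorem fiber (hμ : IsSlideControl ϑ Λ μ) (s : ℝ) :
    μ (Prod.fst ⁻¹' {s} : Set (ℝ × C)) = 0 := by
  have h1 := Measure.map_apply (μ := μ) measurable_fst (measurableSet_singleton s)
  rw [hμ.1] at h1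
  rw [← h1]
  refine le_antisymm (le_trans (Measure.restrict_apply_le _ _) ?_) (zero_le)
  simp

theorem ae_mem (hμ : IsSlideControl ϑ Λ μ) : ∀ᵐ z ∂μ, z ∈ Set.Icc 0 ϑ ×ˢ Λ :=
  ae_iff.2 hμ.2

theorem restrict_self (hμ : IsSlideControl ϑ Λ μ) :
    μ.restrict (Set.Icc 0 ϑ ×ˢ Λ) = μ :=
  Measure.restrict_eq_self_of_ae_mem (ae_mem hμ)

theorem prod_ae_eq (hμ : IsSlideControl ϑ Λ μ) (T : Set ℝ) :
    (T ×ˢ Λ : Set (ℝ × C)) =ᵐ[μ] (Prod.fst ⁻¹' T) := by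
  rw [MeasureTheory.ae_eq_set]
  constructor
  · have h0 : (T ×ˢ Λ : Set (ℝ × C)) \ (Prod.fst ⁻¹' T) = ∅ := by
      ext z; simp only [Set.mem_diff, Set.mem_prod, Set.mem_preimage, Set.mem_empty_iff_false,
        iff_false, not_and]
      tauto
    rw [h0]; exact measure_empty
  · refine measure_mono_null (fun z hz => ?_) hμ.2
    simp only [Set.mem_diff, Set.mem_preimage, Set.mem_prod, not_and] at hz
    simp only [Set.mem_compl_iff, Set.mem_prod, not_and]
    intro _ hzΛ
    exact (hz.2 hz.1) hzΛ

theorem preimage_ae_eq (hμ : IsSlideControl ϑ Λ μ) {T T' : Set ℝ} {b : ℝ}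
    (h1 : T \ T' ⊆ {b}) (h2 : T' \ T ⊆ {b}) :
    (Prod.fst ⁻¹' T : Set (ℝ × C)) =ᵐ[μ] (Prod.fst ⁻¹' T') := by
  rw [MeasureTheory.ae_eq_set]
  constructor
  · exact measure_mono_null (fun z hz => h1 hz) (fiber hμ b)
  · exact measure_mono_null (fun z hz => h2 hz) (fiber hμ b)

theorem integrable_of_slide [TopologicalSpace C] [OpensMeasurableSpace C]
    (hμ : IsSlideControl ϑ Λ μ) (hΛ : MeasurableSet Λ)
    {x : ℝ → EuclideanSpace ℝ (Fin n)} (hx : ContinuousOn x (Set.Icc 0 ϑ))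
    {h : EuclideanSpace ℝ (Fin n) → C → EuclideanSpace ℝ (Fin n)}
    (hh : Continuous fun zc : EuclideanSpace ℝ (Fin n) × C => h zc.1 zc.2)
    (K : ℝ) (hK : ∀ s ∈ Set.Icc 0 ϑ, ∀ c ∈ Λ, ‖h (x s) c‖ ≤ K) :
    Integrable (fun z : ℝ × C => h (x z.1) z.2) μ := by
  haveI := finite hμ
  have hco : ContinuousOn (fun z : ℝ × C => h (x z.1) z.2) (Set.Icc 0 ϑ ×ˢ Λ) := by
    have h1 : ContinuousOn (fun z : ℝ × C => (x z.1, z.2)) (Set.Icc 0 ϑ ×ˢ Λ) :=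
      (hx.comp continuousOn_fst (fun z hz => hz.1)).prodMk continuousOn_snd
    exact hh.comp_continuousOn h1
  have hmeas : AEStronglyMeasurable (fun z : ℝ × C => h (x z.1) z.2) μ := by
    rw [← restrict_self hμ]
    exact hco.aestronglyMeasurable (measurableSet_Icc.prod hΛ)
  exact (integrable_const K).mono' hmeas ((ae_mem hμ).mono fun z hz => hK z.1 hz.1 z.2 hz.2)

theorem integral_Icc_add (hμ : IsSlideControl ϑ Λ μ)
    {G : ℝ × C → EuclideanSpace ℝ (Fin n)} (hG : Integrable G μ)
    {a b c : ℝ} (hab : a ≤ b) (hbc : b ≤ c) :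
    ∫ z in Prod.fst ⁻¹' Set.Icc a c, G z ∂μ
      = (∫ z in Prod.fst ⁻¹' Set.Icc a b, G z ∂μ)
        + ∫ z in Prod.fst ⁻¹' Set.Icc b c, G z ∂μ := by
  have hsplit : (Prod.fst ⁻¹' Set.Icc a c : Set (ℝ × C))
      = Prod.fst ⁻¹' Set.Icc a b ∪ Prod.fst ⁻¹' Set.Ioc b c := by
    rw [← Set.preimage_union, Set.Icc_union_Ioc_eq_Icc hab hbc]
  have hdisj : Disjoint (Prod.fst ⁻¹' Set.Icc a b : Set (ℝ × C)) (Prod.fst ⁻¹' Set.Ioc b c) := by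
    refine Disjoint.preimage _ ?_
    rw [Set.disjoint_left]
    rintro t ⟨_, h1⟩ ⟨h2, _⟩
    exact absurd h1 (not_le.2 h2)
  rw [hsplit, setIntegral_union hdisj (measurable_fst measurableSet_Ioc)
    hG.integrableOn hG.integrableOn]
  congr 1
  refine setIntegral_congr_set (preimage_ae_eq (b := b) hμ ?_ ?_)
  · rintro t ⟨ht1, ht2⟩
    exact absurd ⟨ht1.1.le, ht1.2⟩ ht2
  · rintro t ⟨ht1, ht2⟩
    exact le_antisymm (not_lt.1 fun hlt => ht2 ⟨hlt, ht1.2⟩) ht1.1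

theorem rebase (hμ : IsSlideControl ϑ Λ μ)
    {h : EuclideanSpace ℝ (Fin n) → C → EuclideanSpace ℝ (Fin n)}
    {x : ℝ → EuclideanSpace ℝ (Fin n)} {t₀ : ℝ} {x₀ : EuclideanSpace ℝ (Fin n)}
    (hmot : IsMotion ϑ Λ h μ t₀ x₀ x)
    (hG : Integrable (fun z : ℝ × C => h (x z.1) z.2) μ)
    {t₁ : ℝ} (ht₁ : t₁ ∈ Set.Icc 0 ϑ) :
    IsMotion ϑ Λ h μ t₁ (x t₁) x := by
  obtain ⟨hc, hx0, hfwd, hbwd⟩ := hmot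
  have key : ∀ a b : ℝ, (∫ z in Set.Icc a b ×ˢ Λ, h (x z.1) z.2 ∂μ)
      = ∫ z in Prod.fst ⁻¹' Set.Icc a b, (fun z : ℝ × C => h (x z.1) z.2) z ∂μ :=
    fun a b => setIntegral_congr_set (prod_ae_eq hμ _)
  have add : ∀ {a b c : ℝ}, a ≤ b → b ≤ c →
      (∫ z in Prod.fst ⁻¹' Set.Icc a c, (fun z : ℝ × C => h (x z.1) z.2) z ∂μ)
        = (∫ z in Prod.fst ⁻¹' Set.Icc a b, (fun z : ℝ × C => h (x z.1) z.2) z ∂μ)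
          + ∫ z in Prod.fst ⁻¹' Set.Icc b c, (fun z : ℝ × C => h (x z.1) z.2) z ∂μ :=
    fun hab hbc => integral_Icc_add hμ hG hab hbc
  have fwd : ∀ t ∈ Set.Icc 0 ϑ, t₀ ≤ t → x t = x₀
      + ∫ z in Prod.fst ⁻¹' Set.Icc t₀ t, (fun z : ℝ × C => h (x z.1) z.2) z ∂μ := by
    intro t htm htt; rw [hfwd t htm htt, key]
  have bwd : ∀ t ∈ Set.Icc 0 ϑ, t ≤ t₀ → x t = x₀
      - ∫ z in Prod.fst ⁻¹' Set.Icc t t₀, (fun z : ℝ × C => h (x z.1) z.2) z ∂μ := by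
    intro t htm htt; rw [hbwd t htm htt, key]
  refine ⟨hc, rfl, ?_, ?_⟩
  · intro t htm h1t
    rw [key]
    rcases le_total t₀ t₁ with h01 | h10
    · rw [fwd t htm (h01.trans h1t), fwd t₁ ht₁ h01, add h01 h1t]; abel
    · rcases le_total t t₀ with ht0 | h0t
      · rw [bwd t htm ht0, bwd t₁ ht₁ h10, add h1t ht0]; abel
      · rw [fwd t htm h0t, bwd t₁ ht₁ h10, add h10 h0t]; abel
  · intro t htm ht1
    rw [key]
    rcases le_total t₁ t₀ with h10 | h01
    · rw [bwd t htm (ht1.trans h10), bwd t₁ ht₁ h10, add ht1 h10]; abel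
    · rcases le_total t₀ t with h0t | ht0
      · rw [fwd t htm h0t, fwd t₁ ht₁ h01, add h0t ht1]; abel
      · rw [bwd t htm ht0, fwd t₁ ht₁ h01, add ht0 h01]; abel

def emb {p m : ℕ} (u₀ : Vec p) : ℝ × Vec m → ℝ × (ℝ × Vec p × Vec m) :=
  fun z => (z.1, ((0:ℝ), u₀, z.2))

theorem emb_meas {p m : ℕ} (u₀ : Vec p) : Measurable (emb (m := m) u₀) :=
  measurable_fst.prodMk (measurable_const.prodMk (measurable_const.prodMk measurable_snd))

theorem emb_slide {p m : ℕ} {u₀ : Vec p} {ϑ : ℝ} {P : Set (Vec p)} {Ω : Set (Vec m)}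
    {σ : Measure (ℝ × Vec m)} (hσ : IsSlideControl ϑ Ω σ)
    (hP : MeasurableSet P) (hΩ : MeasurableSet Ω) (hu₀ : u₀ ∈ P) :
    IsSlideControl ϑ (({0, 1} : Set ℝ) ×ˢ P ×ˢ Ω) (σ.map (emb u₀)) := by
  constructor
  · rw [Measure.map_map measurable_fst (emb_meas u₀)]
    exact hσ.1
  · have hS : MeasurableSet (Set.Icc 0 ϑ ×ˢ (({0, 1} : Set ℝ) ×ˢ P ×ˢ Ω)) :=
      measurableSet_Icc.prod
        (((measurableSet_singleton (0:ℝ)).union (measurableSet_singleton 1)).prod (hP.prod hΩ))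
    rw [Measure.map_apply (emb_meas u₀) hS.compl]
    refine measure_mono_null (fun z hz => ?_) hσ.2
    simp only [Set.mem_preimage, Set.mem_compl_iff] at hz ⊢
    intro hmem
    exact hz (show emb u₀ z ∈ _ from ⟨hmem.1, Set.mem_insert 0 {1}, hu₀, hmem.2⟩)

theorem emb_preimage {p m : ℕ} {u₀ : Vec p} {P : Set (Vec p)} {Ω : Set (Vec m)}
    (hu₀ : u₀ ∈ P) (T : Set ℝ) :
    emb (m := m) u₀ ⁻¹' (T ×ˢ (({0, 1} : Set ℝ) ×ˢ P ×ˢ Ω)) = T ×ˢ Ω := by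
  ext z
  simp only [Set.mem_preimage, Set.mem_prod, emb]
  constructor
  · rintro ⟨h1, _, _, h2⟩; exact ⟨h1, h2⟩
  · rintro ⟨h1, h2⟩; exact ⟨h1, Set.mem_insert 0 {1}, hu₀, h2⟩

theorem emb_setIntegral {n p m : ℕ} {u₀ : Vec p} {P : Set (Vec p)} {Ω : Set (Vec m)}
    {σ : Measure (ℝ × Vec m)} (hP : MeasurableSet P) (hΩ : MeasurableSet Ω) (hu₀ : u₀ ∈ P)
    {H : ℝ × (ℝ × Vec p × Vec m) → Vec n}
    (hH : AEStronglyMeasurable H (σ.map (emb u₀))) (a b : ℝ) :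
    ∫ z in Set.Icc a b ×ˢ (({0, 1} : Set ℝ) ×ˢ P ×ˢ Ω), H z ∂(σ.map (emb u₀))
      = ∫ z in Set.Icc a b ×ˢ Ω, H (emb u₀ z) ∂σ := by
  have hS : MeasurableSet (Set.Icc a b ×ˢ (({0, 1} : Set ℝ) ×ˢ P ×ˢ Ω)) :=
    measurableSet_Icc.prod
      (((measurableSet_singleton (0:ℝ)).union (measurableSet_singleton 1)).prod (hP.prod hΩ))
  rw [setIntegral_map hS hH (emb_meas u₀).aemeasurable, emb_preimage hu₀]

theorem lift {n p q m : ℕ} {ϑ : ℝ} {P : Set (Vec p)} {Ω : Set (Vec m)}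
    {σ : Measure (ℝ × Vec m)} (hσ : IsSlideControl ϑ Ω σ)
    (hP : MeasurableSet P) (hΩ : MeasurableSet Ω) {u₀ : Vec p} (hu₀ : u₀ ∈ P)
    {f : Vec n → Vec p → Vec q → Vec n} {g : Vec n → Vec m → Vec n} (v : Vec q)
    {y : ℝ → Vec n} {t₀ : ℝ} {x₀ : Vec n}
    (hy : IsMotion ϑ Ω g σ t₀ x₀ y)
    (hH : AEStronglyMeasurable
      (fun w : ℝ × (ℝ × Vec p × Vec m) =>
        w.2.1 • f (y w.1) w.2.2.1 v + (1 - w.2.1) • g (y w.1) w.2.2.2)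
      (σ.map (emb u₀))) :
    IsMotion ϑ (({0, 1} : Set ℝ) ×ˢ P ×ˢ Ω)
      (fun x ustar => ustar.1 • f x ustar.2.1 v + (1 - ustar.1) • g x ustar.2.2)
      (σ.map (emb u₀)) t₀ x₀ y := by
  obtain ⟨hc, h0, hfwd, hbwd⟩ := hy
  have key : ∀ a b : ℝ,
      (∫ w in Set.Icc a b ×ˢ (({0, 1} : Set ℝ) ×ˢ P ×ˢ Ω),
        (w.2.1 • f (y w.1) w.2.2.1 v + (1 - w.2.1) • g (y w.1) w.2.2.2) ∂(σ.map (emb u₀)))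
      = ∫ w in Set.Icc a b ×ˢ Ω, g (y w.1) w.2 ∂σ := by
    intro a b
    rw [emb_setIntegral hP hΩ hu₀ hH a b]
    refine setIntegral_congr_fun (measurableSet_Icc.prod hΩ) (fun w hw => ?_)
    show (0:ℝ) • f (y w.1) u₀ v + (1 - (0:ℝ)) • g (y w.1) w.2 = g (y w.1) w.2
    simp
  refine ⟨hc, h0, ?_, ?_⟩
  · intro t ht htt
    show y t = x₀ + ∫ w in Set.Icc t₀ t ×ˢ (({0, 1} : Set ℝ) ×ˢ P ×ˢ Ω),
      (w.2.1 • f (y w.1) w.2.2.1 v + (1 - w.2.1) • g (y w.1) w.2.2.2) ∂(σ.map (emb u₀))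
    rw [key]
    exact hfwd t ht htt
  · intro t ht htt
    show y t = x₀ - ∫ w in Set.Icc t t₀ ×ˢ (({0, 1} : Set ℝ) ×ˢ P ×ˢ Ω),
      (w.2.1 • f (y w.1) w.2.2.1 v + (1 - w.2.1) • g (y w.1) w.2.2.2) ∂(σ.map (emb u₀))
    rw [key]
    exact hbwd t ht htt

end SlideAux

/-- Lemma 1 of the paper: if `M ⊆ E` and `E` decreases by sections relative
to `ẋ = g(x,ω)`, `ω ∈ Ω`, then `A*(E)` possesses the same two properties. -/
theorem progAbsorbStar_preserves
    {n p q m : ℕ} (ϑ : ℝ) (hϑ : 0 < ϑ)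
    (P : Set (EuclideanSpace ℝ (Fin p))) (Q : Set (EuclideanSpace ℝ (Fin q)))
    (Ω : Set (EuclideanSpace ℝ (Fin m)))
    (hPne : P.Nonempty) (hPc : IsCompact P)
    (hQne : Q.Nonempty) (hQc : IsCompact Q)
    (hΩne : Ω.Nonempty) (hΩc : IsCompact Ω)
    (f : EuclideanSpace ℝ (Fin n) → EuclideanSpace ℝ (Fin p) → EuclideanSpace ℝ (Fin q) →
      EuclideanSpace ℝ (Fin n))
    (g : EuclideanSpace ℝ (Fin n) → EuclideanSpace ℝ (Fin m) → EuclideanSpace ℝ (Fin n))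
    (hf : Continuous fun z : EuclideanSpace ℝ (Fin n) × EuclideanSpace ℝ (Fin p) ×
      EuclideanSpace ℝ (Fin q) => f z.1 z.2.1 z.2.2)
    (hg : Continuous fun z : EuclideanSpace ℝ (Fin n) × EuclideanSpace ℝ (Fin m) => g z.1 z.2)
    (hfLip : ∀ x₀ : EuclideanSpace ℝ (Fin n), ∃ ε > (0 : ℝ), ∃ L : NNReal,
      ∀ u ∈ P, ∀ v ∈ Q, LipschitzOnWith L (fun x => f x u v) (Metric.ball x₀ ε))
    (hgLip : ∀ x₀ : EuclideanSpace ℝ (Fin n), ∃ ε > (0 : ℝ), ∃ L : NNReal,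
      ∀ ω ∈ Ω, LipschitzOnWith L (fun x => g x ω) (Metric.ball x₀ ε))
    (hfGrow : ∃ c > (0 : ℝ), ∀ x, ∀ u ∈ P, ∀ v ∈ Q, ‖f x u v‖ ≤ c * (1 + ‖x‖))
    (hgGrow : ∃ c > (0 : ℝ), ∀ x, ∀ ω ∈ Ω, ‖g x ω‖ ≤ c * (1 + ‖x‖))
    (M : Set (ℝ × EuclideanSpace ℝ (Fin n))) (hMcl : IsClosed M)
    (F : Set (EuclideanSpace ℝ (Fin n))) (hF : F = {x | (ϑ, x) ∈ M})
    -- `M` is the controllability set of `ẋ = g(x,ω)`, `ω ∈ Ω`, with target `{ϑ} × F`: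
    (hM : M = {px : ℝ × EuclideanSpace ℝ (Fin n) | px.1 ∈ Set.Icc 0 ϑ ∧
      ∃ xF ∈ F, ∃ σ : Measure (ℝ × EuclideanSpace ℝ (Fin m)), IsSlideControl ϑ Ω σ ∧
        ∃ y : ℝ → EuclideanSpace ℝ (Fin n), IsMotion ϑ Ω g σ ϑ xF y ∧ y px.1 = px.2})
    (E : Set (ℝ × EuclideanSpace ℝ (Fin n))) (hEcl : IsClosed E)
    (hEsub : E ⊆ Set.Icc 0 ϑ ×ˢ (Set.univ : Set (EuclideanSpace ℝ (Fin n))))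
    (hME : M ⊆ E) (hEdec : DecreasesBySections ϑ Ω g E) :
    M ⊆ progAbsorbStar ϑ P Q Ω f g F E ∧
      DecreasesBySections ϑ Ω g (progAbsorbStar ϑ P Q Ω f g F E) := by
  obtain ⟨cf, hcf0, hcf⟩ := hfGrow
  obtain ⟨cg, hcg0, hcg⟩ := hgGrow
  obtain ⟨u₀, hu₀⟩ := hPne
  have hPmeas : MeasurableSet P := hPc.isClosed.measurableSet
  have hΩmeas : MeasurableSet Ω := hΩc.isClosed.measurableSet
  have hΛmeas : MeasurableSet (({0, 1} : Set ℝ) ×ˢ P ×ˢ Ω) :=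
    ((measurableSet_singleton (0:ℝ)).union (measurableSet_singleton 1)).prod
      (hPmeas.prod hΩmeas)
  have hhcont : ∀ v : EuclideanSpace ℝ (Fin q),
      Continuous fun zc : EuclideanSpace ℝ (Fin n) ×
          (ℝ × EuclideanSpace ℝ (Fin p) × EuclideanSpace ℝ (Fin m)) =>
        zc.2.1 • f zc.1 zc.2.2.1 v + (1 - zc.2.1) • g zc.1 zc.2.2.2 := by
    intro v
    exact ((continuous_fst.comp continuous_snd).smul
        (hf.comp (continuous_fst.prodMk
          ((continuous_fst.comp (continuous_snd.comp continuous_snd)).prodMk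
            continuous_const)))).add
      ((continuous_const.sub (continuous_fst.comp continuous_snd)).smul
        (hg.comp (continuous_fst.prodMk
          (continuous_snd.comp (continuous_snd.comp continuous_snd)))))
  have hstarBound : ∀ v ∈ Q, ∀ (x : EuclideanSpace ℝ (Fin n)) (R : ℝ), ‖x‖ ≤ R →
      ∀ c ∈ (({0, 1} : Set ℝ) ×ˢ P ×ˢ Ω),
        ‖c.1 • f x c.2.1 v + (1 - c.1) • g x c.2.2‖ ≤ (cf + cg) * (1 + R) := by
    rintro v hv x R hxR ⟨ν, u, ω⟩ ⟨hν, hu, hω⟩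
    have hnn := norm_nonneg x
    have h1R : (0:ℝ) ≤ 1 + R := by linarith
    have hfb : ‖f x u v‖ ≤ cf * (1 + R) :=
      le_trans (hcf x u hu v hv) (by nlinarith)
    have hgb : ‖g x ω‖ ≤ cg * (1 + R) :=
      le_trans (hcg x ω hω) (by nlinarith)
    simp only [Set.mem_insert_iff, Set.mem_singleton_iff] at hν
    rcases hν with h0 | h1
    · subst h0
      simp only [zero_smul, zero_add, sub_zero, one_smul]
      nlinarith [mul_nonneg hcf0.le h1R]
    · subst h1
      simp only [one_smul, sub_self, zero_smul, add_zero]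
      nlinarith [mul_nonneg hcg0.le h1R]
  constructor
  · -- M ⊆ A*(E)
    rintro ⟨ts, xs⟩ hmem
    have hmemE : (ts, xs) ∈ E := hME hmem
    have hmem' := hmem
    rw [hM] at hmem'
    obtain ⟨hts, xF, hxF, σ, hσ, y, hy, hyts⟩ := hmem'
    have hxFM : (ϑ, xF) ∈ M := by rw [hF] at hxF; exact hxF
    obtain ⟨Ry, hRy⟩ := isCompact_Icc.exists_bound_of_continuousOn hy.1
    have hGy : Integrable (fun z : ℝ × EuclideanSpace ℝ (Fin m) => g (y z.1) z.2) σ := by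
      refine SlideAux.integrable_of_slide hσ hΩmeas hy.1 hg (cg * (1 + Ry)) ?_
      intro s hs ω hω
      refine le_trans (hcg (y s) ω hω) ?_
      have h1 := hRy s hs
      nlinarith [norm_nonneg (y s)]
    have hymot : IsMotion ϑ Ω g σ ts xs y := by
      have h2 := SlideAux.rebase hσ hy hGy (t₁ := ts) hts
      rwa [hyts] at h2
    refine ⟨hmemE, ?_⟩
    intro v hv
    have hsl := SlideAux.emb_slide (u₀ := u₀) hσ hPmeas hΩmeas hu₀
    have hHint : Integrable (fun w : ℝ × (ℝ × EuclideanSpace ℝ (Fin p) ×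
          EuclideanSpace ℝ (Fin m)) =>
        w.2.1 • f (y w.1) w.2.2.1 v + (1 - w.2.1) • g (y w.1) w.2.2.2)
        (σ.map (SlideAux.emb u₀)) := by
      refine SlideAux.integrable_of_slide (h := fun x ustar => ustar.1 • f x ustar.2.1 v + (1 - ustar.1) • g x ustar.2.2) (x := y)
        hsl hΛmeas hy.1 (hhcont v) ((cf + cg) * (1 + Ry)) ?_
      intro s hs c hc
      exact hstarBound v hv (y s) Ry (hRy s hs) c hc
    refine ⟨σ.map (SlideAux.emb u₀), hsl, y,
      SlideAux.lift hσ hPmeas hΩmeas hu₀ v hymot hHint.aestronglyMeasurable, ?_, ?_⟩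
    · rw [hy.2.1]
      exact hxF
    · intro t htmem
      exact hEdec ϑ xF (hME hxFM) t ⟨hts.1.trans htmem.1, htmem.2⟩ σ hσ y hy
  · -- A*(E) decreases by sections
    rintro ts xs hstar t ht σ hσ y hy
    have hE1 : (ts, xs) ∈ E := hstar.1
    have htsI : ts ∈ Set.Icc 0 ϑ := (hEsub hE1).1
    have htI : t ∈ Set.Icc 0 ϑ := ⟨ht.1, ht.2.trans htsI.2⟩
    have hytE : (t, y t) ∈ E := hEdec ts xs hE1 t ht σ hσ y hy
    refine ⟨hytE, ?_⟩
    intro v hv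
    obtain ⟨μ₁, hμ₁, y₁, hy₁, hy₁F, hy₁E⟩ := hstar.2 v hv
    have hyts : y ts = xs := hy.2.1
    have hy₁ts : y₁ ts = xs := hy₁.2.1
    set z := (fun s : ℝ => if s ≤ ts then y s else y₁ s) with hzdef
    have hz_le : ∀ s, s ≤ ts → z s = y s := by
      intro s hs; rw [hzdef]; exact if_pos hs
    have hz_ge : ∀ s, ts ≤ s → z s = y₁ s := by
      intro s hs
      rw [hzdef]
      by_cases h : s ≤ ts
      · have hse : s = ts := le_antisymm h hs
        simp only [if_pos h]
        rw [hse, hyts, hy₁ts]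
      · exact if_neg h
    have hzc : ContinuousOn z (Set.Icc 0 ϑ) := by
      rw [hzdef]
      refine ContinuousOn.if ?_ ?_ ?_
      · intro a ha
        have hfr : a ∈ frontier (Set.Iic ts) := ha.2
        rw [frontier_Iic] at hfr
        have ha' : a = ts := hfr
        rw [ha', hyts, hy₁ts]
      · exact hy.1.mono Set.inter_subset_left
      · exact hy₁.1.mono Set.inter_subset_left
    have hsl := SlideAux.emb_slide (u₀ := u₀) hσ hPmeas hΩmeas hu₀
    have hAmeas : MeasurableSet (Prod.fst ⁻¹' Set.Iic ts :
        Set (ℝ × (ℝ × EuclideanSpace ℝ (Fin p) × EuclideanSpace ℝ (Fin m)))) :=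
      measurable_fst measurableSet_Iic
    set μ₂ := (σ.map (SlideAux.emb u₀)).restrict (Prod.fst ⁻¹' Set.Iic ts)
      + μ₁.restrict (Prod.fst ⁻¹' Set.Iic ts)ᶜ with hμ₂def
    have hslide₂ : IsSlideControl ϑ (({0, 1} : Set ℝ) ×ˢ P ×ˢ Ω) μ₂ := by
      constructor
      · rw [hμ₂def, Measure.map_add _ _ measurable_fst]
        have h1 : ((σ.map (SlideAux.emb u₀)).restrict (Prod.fst ⁻¹' Set.Iic ts)).map Prod.fst
            = ((σ.map (SlideAux.emb u₀)).map Prod.fst).restrict (Set.Iic ts) :=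
          (Measure.restrict_map measurable_fst measurableSet_Iic).symm
        have h2 : (μ₁.restrict (Prod.fst ⁻¹' Set.Iic ts)ᶜ).map Prod.fst
            = (μ₁.map Prod.fst).restrict (Set.Iic ts)ᶜ := by
          rw [← Set.preimage_compl]
          exact (Measure.restrict_map measurable_fst measurableSet_Iic.compl).symm
        rw [h1, h2, hsl.1, hμ₁.1, Measure.restrict_add_restrict_compl measurableSet_Iic]
      · rw [hμ₂def]
        have hSc : MeasurableSet ((Set.Icc 0 ϑ ×ˢ (({0, 1} : Set ℝ) ×ˢ P ×ˢ Ω))ᶜ) :=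
          (measurableSet_Icc.prod hΛmeas).compl
        rw [Measure.add_apply, Measure.restrict_apply hSc, Measure.restrict_apply hSc]
        rw [measure_mono_null Set.inter_subset_left hsl.2,
          measure_mono_null Set.inter_subset_left hμ₁.2, add_zero]
    obtain ⟨Rz, hRz⟩ := isCompact_Icc.exists_bound_of_continuousOn hzc
    have hHσ : Integrable (fun w : ℝ × (ℝ × EuclideanSpace ℝ (Fin p) ×
          EuclideanSpace ℝ (Fin m)) =>
        w.2.1 • f (z w.1) w.2.2.1 v + (1 - w.2.1) • g (z w.1) w.2.2.2)
        (σ.map (SlideAux.emb u₀)) :=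
      SlideAux.integrable_of_slide (h := fun x ustar => ustar.1 • f x ustar.2.1 v + (1 - ustar.1) • g x ustar.2.2) (x := z)
        hsl hΛmeas hzc (hhcont v) ((cf + cg) * (1 + Rz))
        (fun s hs c hc => hstarBound v hv (z s) Rz (hRz s hs) c hc)
    have hHμ₁ : Integrable (fun w : ℝ × (ℝ × EuclideanSpace ℝ (Fin p) ×
          EuclideanSpace ℝ (Fin m)) =>
        w.2.1 • f (z w.1) w.2.2.1 v + (1 - w.2.1) • g (z w.1) w.2.2.2) μ₁ :=
      SlideAux.integrable_of_slide (h := fun x ustar => ustar.1 • f x ustar.2.1 v + (1 - ustar.1) • g x ustar.2.2) (x := z)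
        hμ₁ hΛmeas hzc (hhcont v) ((cf + cg) * (1 + Rz))
        (fun s hs c hc => hstarBound v hv (z s) Rz (hRz s hs) c hc)
    obtain ⟨Ry, hRy⟩ := isCompact_Icc.exists_bound_of_continuousOn hy.1
    have hGy : Integrable (fun w : ℝ × EuclideanSpace ℝ (Fin m) => g (y w.1) w.2) σ := by
      refine SlideAux.integrable_of_slide hσ hΩmeas hy.1 hg (cg * (1 + Ry)) ?_
      intro s hs ω hω
      refine le_trans (hcg (y s) ω hω) ?_
      have h1 := hRy s hs
      nlinarith [norm_nonneg (y s)]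
    have hymot_t : IsMotion ϑ Ω g σ t (y t) y := SlideAux.rebase hσ hy hGy htI
    have hsplit : ∀ T : Set ℝ, MeasurableSet T →
        (∫ w in T ×ˢ (({0, 1} : Set ℝ) ×ˢ P ×ˢ Ω),
          (w.2.1 • f (z w.1) w.2.2.1 v + (1 - w.2.1) • g (z w.1) w.2.2.2) ∂μ₂)
        = (∫ w in (T ∩ Set.Iic ts) ×ˢ (({0, 1} : Set ℝ) ×ˢ P ×ˢ Ω),
            (w.2.1 • f (z w.1) w.2.2.1 v + (1 - w.2.1) • g (z w.1) w.2.2.2)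
              ∂(σ.map (SlideAux.emb u₀)))
          + ∫ w in (T ∩ Set.Ioi ts) ×ˢ (({0, 1} : Set ℝ) ×ˢ P ×ˢ Ω),
              (w.2.1 • f (z w.1) w.2.2.1 v + (1 - w.2.1) • g (z w.1) w.2.2.2) ∂μ₁ := by
      intro T hT
      have hTmeas : MeasurableSet (T ×ˢ (({0, 1} : Set ℝ) ×ˢ P ×ˢ Ω)) := hT.prod hΛmeas
      have hA1 : (T ×ˢ (({0, 1} : Set ℝ) ×ˢ P ×ˢ Ω)) ∩ (Prod.fst ⁻¹' Set.Iic ts)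
          = (T ∩ Set.Iic ts) ×ˢ (({0, 1} : Set ℝ) ×ˢ P ×ˢ Ω) := by
        ext w; constructor
        · rintro ⟨⟨h1, h2⟩, h3⟩; exact ⟨⟨h1, h3⟩, h2⟩
        · rintro ⟨⟨h1, h3⟩, h2⟩; exact ⟨⟨h1, h2⟩, h3⟩
      have hA2 : (T ×ˢ (({0, 1} : Set ℝ) ×ˢ P ×ˢ Ω)) ∩ (Prod.fst ⁻¹' Set.Iic ts)ᶜ
          = (T ∩ Set.Ioi ts) ×ˢ (({0, 1} : Set ℝ) ×ˢ P ×ˢ Ω) := by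
        ext w
        simp only [Set.mem_inter_iff, Set.mem_compl_iff, Set.mem_preimage, Set.mem_Iic,
          Set.mem_prod, Set.mem_Ioi, not_le]
        tauto
      rw [hμ₂def, Measure.restrict_add,
        integral_add_measure hHσ.restrict.restrict hHμ₁.restrict.restrict,
        Measure.restrict_restrict hTmeas, Measure.restrict_restrict hTmeas, hA1, hA2]
    have hσpart : ∀ a b : ℝ, b ≤ ts →
        (∫ w in Set.Icc a b ×ˢ (({0, 1} : Set ℝ) ×ˢ P ×ˢ Ω),
          (w.2.1 • f (z w.1) w.2.2.1 v + (1 - w.2.1) • g (z w.1) w.2.2.2)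
            ∂(σ.map (SlideAux.emb u₀)))
        = ∫ w in Set.Icc a b ×ˢ Ω, g (y w.1) w.2 ∂σ := by
      intro a b hbts
      rw [SlideAux.emb_setIntegral hPmeas hΩmeas hu₀ hHσ.aestronglyMeasurable a b]
      refine setIntegral_congr_fun (measurableSet_Icc.prod hΩmeas) (fun w hw => ?_)
      show (0:ℝ) • f (z w.1) u₀ v + (1 - (0:ℝ)) • g (z w.1) w.2 = g (y w.1) w.2
      rw [hz_le w.1 (hw.1.2.trans hbts)]
      simp
    have hμ₁part : ∀ a b : ℝ, a ≤ ts → ts ≤ b →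
        (∫ w in (Set.Icc a b ∩ Set.Ioi ts) ×ˢ (({0, 1} : Set ℝ) ×ˢ P ×ˢ Ω),
          (w.2.1 • f (z w.1) w.2.2.1 v + (1 - w.2.1) • g (z w.1) w.2.2.2) ∂μ₁)
        = ∫ w in Set.Icc ts b ×ˢ (({0, 1} : Set ℝ) ×ˢ P ×ˢ Ω),
            (w.2.1 • f (y₁ w.1) w.2.2.1 v + (1 - w.2.1) • g (y₁ w.1) w.2.2.2) ∂μ₁ := by
      intro a b hats htsb
      rw [setIntegral_congr_set (SlideAux.prod_ae_eq hμ₁ (Set.Icc a b ∩ Set.Ioi ts)),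
        setIntegral_congr_set (SlideAux.preimage_ae_eq (b := ts) hμ₁
          (T := Set.Icc a b ∩ Set.Ioi ts) (T' := Set.Icc ts b) ?_ ?_),
        setIntegral_congr_set (SlideAux.prod_ae_eq hμ₁ (Set.Icc ts b)).symm]
      · refine setIntegral_congr_fun (measurableSet_Icc.prod hΛmeas) (fun w hw => ?_)
        rw [hz_ge w.1 hw.1.1]
      · rintro x ⟨⟨⟨_, hxb⟩, hxts⟩, hx2⟩
        exact absurd ⟨le_of_lt hxts, hxb⟩ hx2
      · rintro x ⟨⟨hx1, hxb⟩, hx2⟩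
        have hxle : x ≤ ts := by
          by_contra hcon
          exact hx2 ⟨⟨hats.trans hx1, hxb⟩, not_le.1 hcon⟩
        exact le_antisymm hxle hx1
    have eIic : ∀ a b : ℝ, b ≤ ts → Set.Icc a b ∩ Set.Iic ts = Set.Icc a b := by
      intro a b hb; ext x
      simp only [Set.mem_inter_iff, Set.mem_Icc, Set.mem_Iic]
      exact ⟨fun hh => hh.1, fun hh => ⟨hh, hh.2.trans hb⟩⟩
    have eIoi : ∀ a b : ℝ, b ≤ ts →
        Set.Icc a b ∩ Set.Ioi ts = (∅ : Set ℝ) := by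
      intro a b hb; ext x
      simp only [Set.mem_inter_iff, Set.mem_Icc, Set.mem_Ioi, Set.mem_empty_iff_false,
        iff_false, not_and]
      rintro ⟨_, h1⟩
      exact not_lt.2 (h1.trans hb)
    refine ⟨μ₂, hslide₂, z, ⟨hzc, hz_le t ht.2, ?_, ?_⟩, ?_, ?_⟩
    · -- forward equation for the glued motion
      intro s hsI htles
      show z s = y t + ∫ w in Set.Icc t s ×ˢ (({0, 1} : Set ℝ) ×ˢ P ×ˢ Ω),
        (w.2.1 • f (z w.1) w.2.2.1 v + (1 - w.2.1) • g (z w.1) w.2.2.2) ∂μ₂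
      rw [hsplit (Set.Icc t s) measurableSet_Icc]
      rcases le_total s ts with hsle | hsge
      · rw [eIic t s hsle, hσpart t s hsle, eIoi t s hsle, Set.empty_prod,
          setIntegral_empty, add_zero, hz_le s hsle]
        exact hymot_t.2.2.1 s hsI htles
      · have e1 : Set.Icc t s ∩ Set.Iic ts = Set.Icc t ts := by
          ext x; simp only [Set.mem_inter_iff, Set.mem_Icc, Set.mem_Iic]
          constructor
          · rintro ⟨⟨h1, _⟩, h2⟩; exact ⟨h1, h2⟩
          · rintro ⟨h1, h2⟩; exact ⟨⟨h1, h2.trans hsge⟩, h2⟩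
        rw [e1, hσpart t ts le_rfl, hμ₁part t s ht.2 hsge]
        have h₁ : y ts = y t + ∫ w in Set.Icc t ts ×ˢ Ω, g (y w.1) w.2 ∂σ :=
          hymot_t.2.2.1 ts htsI ht.2
        have h₂ : y₁ s = xs + ∫ w in Set.Icc ts s ×ˢ (({0, 1} : Set ℝ) ×ˢ P ×ˢ Ω),
            (w.2.1 • f (y₁ w.1) w.2.2.1 v + (1 - w.2.1) • g (y₁ w.1) w.2.2.2) ∂μ₁ :=
          hy₁.2.2.1 s hsI hsge
        rw [hyts] at h₁
        rw [hz_ge s hsge, h₂, h₁]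
        abel
    · -- backward equation for the glued motion
      intro s hsI hslet
      show z s = y t - ∫ w in Set.Icc s t ×ˢ (({0, 1} : Set ℝ) ×ˢ P ×ˢ Ω),
        (w.2.1 • f (z w.1) w.2.2.1 v + (1 - w.2.1) • g (z w.1) w.2.2.2) ∂μ₂
      rw [hsplit (Set.Icc s t) measurableSet_Icc]
      rw [eIic s t ht.2, hσpart s t ht.2, eIoi s t ht.2, Set.empty_prod,
        setIntegral_empty, add_zero, hz_le s (hslet.trans ht.2)]
      exact hymot_t.2.2.2 s hsI hslet
    · -- endpoint in the target set
      rw [hz_ge ϑ htsI.2]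
      exact hy₁F
    · -- viability in E
      intro s hs
      by_cases hcs : s ≤ ts
      · rw [hz_le s hcs]
        exact hEdec ts xs hE1 s ⟨ht.1.trans hs.1, hcs⟩ σ hσ y hy
      · rw [hz_ge s (le_of_not_ge hcs)]
        exact hy₁E s ⟨le_of_not_ge hcs, hs.2⟩
end
end

section
/- Let 0 ≤ t ≤ t* ≤ ϑ, let σ, μ ∈ R_Λ, and define the glued measure μ̃ on [0,ϑ] × Λ by μ̃(B) = σ(B ∩ ([0,t*] × Λ)) + μ(B ∩ ((t*,ϑ] × Λ)) for Borel sets B. Then μ̃ ∈ R_Λ, and if y : [0,ϑ] → ℝⁿ is a motion of ẋ = h(x,b) generated by σ with y(t) = x̄, and z : [0,ϑ] → ℝⁿ is a motion of ẋ = h(x,b) generated by μ with z(t*) = y(t*), then the function w equal to y on [0,t*] and to z on [t*,ϑ] is a motion of ẋ = h(x,b) generated by μ̃ with w(t) = x̄. -/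
open MeasureTheory

noncomputable section

/-- gluing of slide controls and of the corresponding motions.  If
`μ̃(B) = σ(B ∩ ([0,t*]×Λ)) + μ(B ∩ ((t*,ϑ]×Λ))`, `y` is a motion generated by `σ` with
`y(t) = xbar`, and `z` is a motion generated by `μ` with `z(t*) = y(t*)`, then `μ̃` is a
slide control and the function equal to `y` on `[0,t*]` and to `z` on `[t*,ϑ]` is a motion
generated by `μ̃` with value `xbar` at `t`. -/
theorem glued_slide_control_motion
    {k n : ℕ} (ϑ : ℝ) (hϑ : 0 < ϑ)
    (Λ : Set (EuclideanSpace ℝ (Fin k))) (hΛne : Λ.Nonempty) (hΛc : IsCompact Λ)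
    (h : EuclideanSpace ℝ (Fin n) → EuclideanSpace ℝ (Fin k) → EuclideanSpace ℝ (Fin n))
    (hh : Continuous fun z : EuclideanSpace ℝ (Fin n) × EuclideanSpace ℝ (Fin k) => h z.1 z.2)
    (t tstar : ℝ) (h0t : 0 ≤ t) (httstar : t ≤ tstar) (htstarϑ : tstar ≤ ϑ)
    (σ μ : Measure (ℝ × EuclideanSpace ℝ (Fin k)))
    (hσ : IsSlideControl ϑ Λ σ) (hμ : IsSlideControl ϑ Λ μ)
    (xbar : EuclideanSpace ℝ (Fin n)) (y z : ℝ → EuclideanSpace ℝ (Fin n))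
    (hy : IsMotion ϑ Λ h σ t xbar y)
    (hz : IsMotion ϑ Λ h μ tstar (y tstar) z) :
    IsSlideControl ϑ Λ
        (σ.restrict (Set.Icc 0 tstar ×ˢ Λ) + μ.restrict (Set.Ioc tstar ϑ ×ˢ Λ)) ∧
      IsMotion ϑ Λ h
        (σ.restrict (Set.Icc 0 tstar ×ˢ Λ) + μ.restrict (Set.Ioc tstar ϑ ×ˢ Λ))
        t xbar (fun τ => if τ ≤ tstar then y τ else z τ) := by
  classical
  obtain ⟨hσ1, hσ2⟩ := hσ
  obtain ⟨hμ1, hμ2⟩ := hμ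
  obtain ⟨hyc, hyt, hyf, hyb⟩ := hy
  obtain ⟨hzc, hzt, hzf, hzb⟩ := hz
  have h0ts : (0:ℝ) ≤ tstar := h0t.trans httstar
  have mΛ : MeasurableSet Λ := hΛc.isClosed.measurableSet
  have mQ : MeasurableSet (Set.Icc (0:ℝ) ϑ ×ˢ Λ) := measurableSet_Icc.prod mΛ
  -- restriction to a time-slab equals restriction to the preimage of the time set
  have key : ∀ ν : Measure (ℝ × EuclideanSpace ℝ (Fin k)), ν ((Set.Icc 0 ϑ ×ˢ Λ)ᶜ) = 0 →
      ∀ s : Set ℝ, s ⊆ Set.Icc 0 ϑ →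
      ν.restrict (s ×ˢ Λ) = ν.restrict (Prod.fst ⁻¹' s) := by
    intro ν hν s hs
    apply Measure.restrict_congr_set
    rw [Filter.eventuallyEq_set]
    have hQae : ∀ᵐ ξ ∂ν, ξ ∈ Set.Icc (0:ℝ) ϑ ×ˢ Λ := mem_ae_iff.mpr hν
    filter_upwards [hQae] with ξ hξ
    have hξ2 : ξ.2 ∈ Λ := hξ.2
    simp [Set.mem_prod, hξ2]
  have mapσ : (σ.restrict (Set.Icc 0 tstar ×ˢ Λ)).map Prod.fst
      = volume.restrict (Set.Icc 0 tstar) := by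
    rw [key σ hσ2 _ (Set.Icc_subset_Icc le_rfl htstarϑ),
      ← Measure.restrict_map measurable_fst measurableSet_Icc, hσ1,
      Measure.restrict_restrict measurableSet_Icc,
      Set.inter_eq_left.2 (Set.Icc_subset_Icc le_rfl htstarϑ)]
  have hIocsub : Set.Ioc tstar ϑ ⊆ Set.Icc 0 ϑ := fun x hx => ⟨h0ts.trans hx.1.le, hx.2⟩
  have mapμ : (μ.restrict (Set.Ioc tstar ϑ ×ˢ Λ)).map Prod.fst
      = volume.restrict (Set.Ioc tstar ϑ) := by
    rw [key μ hμ2 _ hIocsub,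
      ← Measure.restrict_map measurable_fst measurableSet_Ioc, hμ1,
      Measure.restrict_restrict measurableSet_Ioc, Set.inter_eq_left.2 hIocsub]
  have hdisj : Disjoint (Set.Icc 0 tstar) (Set.Ioc tstar ϑ) := by
    rw [Set.disjoint_left]
    intro a ha ha'
    exact absurd ha.2 (not_le.2 ha'.1)
  have hslide : IsSlideControl ϑ Λ
      (σ.restrict (Set.Icc 0 tstar ×ˢ Λ) + μ.restrict (Set.Ioc tstar ϑ ×ˢ Λ)) := by
    constructor
    · rw [Measure.map_add _ _ measurable_fst, mapσ, mapμ,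
        ← Measure.restrict_union hdisj measurableSet_Ioc,
        Set.Icc_union_Ioc_eq_Icc h0ts htstarϑ]
    · rw [Measure.add_apply, Measure.restrict_apply mQ.compl,
        Measure.restrict_apply mQ.compl,
        measure_mono_null Set.inter_subset_left hσ2,
        measure_mono_null Set.inter_subset_left hμ2, add_zero]
  -- continuity of the glued motion
  have contw : ContinuousOn (fun τ => if τ ≤ tstar then y τ else z τ) (Set.Icc 0 ϑ) := by
    apply ContinuousOn.if
    · intro a ha
      have hfr : a ∈ frontier (Set.Iic tstar) := ha.2
      rw [frontier_Iic] at hfr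
      have ha' : a = tstar := hfr
      rw [ha', hzt]
    · exact hyc.mono Set.inter_subset_left
    · exact hzc.mono Set.inter_subset_left
  -- finiteness of σ and μ
  have hfin : ∀ ν : Measure (ℝ × EuclideanSpace ℝ (Fin k)),
      ν.map Prod.fst = volume.restrict (Set.Icc 0 ϑ) → IsFiniteMeasure ν := by
    intro ν h1
    constructor
    have huniv : ν Set.univ = (ν.map Prod.fst) Set.univ := by
      rw [Measure.map_apply measurable_fst MeasurableSet.univ, Set.preimage_univ]
    rw [huniv, h1, Measure.restrict_apply_univ, Real.volume_Icc]
    exact ENNReal.ofReal_lt_top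
  haveI finσ : IsFiniteMeasure σ := hfin σ hσ1
  haveI finμ : IsFiniteMeasure μ := hfin μ hμ1
  -- boundedness and measurability of the integrand
  have hcw : ContinuousOn
      (fun ξ : ℝ × EuclideanSpace ℝ (Fin k) =>
        h ((fun τ => if τ ≤ tstar then y τ else z τ) ξ.1) ξ.2)
      (Set.Icc 0 ϑ ×ˢ Λ) := by
    have h1 : ContinuousOn
        (fun ξ : ℝ × EuclideanSpace ℝ (Fin k) =>
          ((fun τ => if τ ≤ tstar then y τ else z τ) ξ.1, ξ.2))
        (Set.Icc 0 ϑ ×ˢ Λ) :=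
      (contw.comp continuous_fst.continuousOn fun ξ hξ => hξ.1).prodMk
        continuous_snd.continuousOn
    exact hh.comp_continuousOn h1
  obtain ⟨C, hC⟩ := (isCompact_Icc.prod hΛc).exists_bound_of_continuousOn hcw
  have integ : ∀ ν : Measure (ℝ × EuclideanSpace ℝ (Fin k)), IsFiniteMeasure ν →
      ∀ S : Set (ℝ × EuclideanSpace ℝ (Fin k)), MeasurableSet S → S ⊆ Set.Icc 0 ϑ ×ˢ Λ →
      Integrable (fun ξ : ℝ × EuclideanSpace ℝ (Fin k) =>
        h ((fun τ => if τ ≤ tstar then y τ else z τ) ξ.1) ξ.2) (ν.restrict S) := by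
    intro ν hfinν S mS hSQ
    haveI := hfinν
    constructor
    · exact (hcw.mono hSQ).aestronglyMeasurable mS
    · apply HasFiniteIntegral.of_bounded (C := C)
      filter_upwards [ae_restrict_mem mS] with ξ hξ
      exact hC ξ (hSQ hξ)
  -- splitting of the glued measure restricted to a time-slab
  have restr : ∀ s : Set ℝ, MeasurableSet s →
      (σ.restrict (Set.Icc 0 tstar ×ˢ Λ) + μ.restrict (Set.Ioc tstar ϑ ×ˢ Λ)).restrict (s ×ˢ Λ)
      = σ.restrict ((s ∩ Set.Icc 0 tstar) ×ˢ Λ)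
        + μ.restrict ((s ∩ Set.Ioc tstar ϑ) ×ˢ Λ) := by
    intro s hs
    rw [Measure.restrict_add, Measure.restrict_restrict (hs.prod mΛ),
      Measure.restrict_restrict (hs.prod mΛ), Set.prod_inter_prod,
      Set.prod_inter_prod, Set.inter_self]
  refine ⟨hslide, contw, ?_, ?_, ?_⟩
  · show (if t ≤ tstar then y t else z t) = xbar
    rw [if_pos httstar, hyt]
  -- forward equation
  · intro τ hτ htτ
    by_cases hc : τ ≤ tstar
    · show (if τ ≤ tstar then y τ else z τ) = _
      rw [if_pos hc, restr _ measurableSet_Icc,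
        Set.inter_eq_left.2 (Set.Icc_subset_Icc h0t hc),
        show Set.Icc t τ ∩ Set.Ioc tstar ϑ = ∅ by
          apply Set.eq_empty_of_forall_notMem
          rintro x ⟨hx1, hx2⟩
          exact absurd (hx1.2.trans hc) (not_le.2 hx2.1),
        Set.empty_prod, Measure.restrict_empty, add_zero]
      have hint : ∫ ξ in Set.Icc t τ ×ˢ Λ,
          h ((fun τ => if τ ≤ tstar then y τ else z τ) ξ.1) ξ.2 ∂σ
          = ∫ ξ in Set.Icc t τ ×ˢ Λ, h (y ξ.1) ξ.2 ∂σ := by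
        apply setIntegral_congr_fun (measurableSet_Icc.prod mΛ)
        intro ξ hξ
        simp only [if_pos (hξ.1.2.trans hc)]
      rw [hint]
      exact hyf τ hτ htτ
    · show (if τ ≤ tstar then y τ else z τ) = _
      have hsτ : tstar ≤ τ := (not_le.1 hc).le
      have hτϑ : τ ≤ ϑ := hτ.2
      rw [if_neg hc, restr _ measurableSet_Icc,
        show Set.Icc t τ ∩ Set.Icc 0 tstar = Set.Icc t tstar by
          rw [Set.Icc_inter_Icc, sup_eq_left.2 h0t, inf_eq_right.2 hsτ],
        show Set.Icc t τ ∩ Set.Ioc tstar ϑ = Set.Ioc tstar τ by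
          ext x
          simp only [Set.mem_inter_iff, Set.mem_Icc, Set.mem_Ioc]
          constructor
          · rintro ⟨⟨_, hx2⟩, hx3, _⟩; exact ⟨hx3, hx2⟩
          · rintro ⟨hx1, hx2⟩
            exact ⟨⟨httstar.trans hx1.le, hx2⟩, hx1, hx2.trans hτϑ⟩]
      rw [integral_add_measure
        (integ σ finσ _ (measurableSet_Icc.prod mΛ)
          (Set.prod_mono (Set.Icc_subset_Icc h0t htstarϑ) subset_rfl))
        (integ μ finμ _ (measurableSet_Ioc.prod mΛ)
          (Set.prod_mono (fun x hx => ⟨h0ts.trans hx.1.le, hx.2.trans hτϑ⟩) subset_rfl))]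
      have hint1 : ∫ ξ in Set.Icc t tstar ×ˢ Λ,
          h ((fun τ => if τ ≤ tstar then y τ else z τ) ξ.1) ξ.2 ∂σ
          = ∫ ξ in Set.Icc t tstar ×ˢ Λ, h (y ξ.1) ξ.2 ∂σ := by
        apply setIntegral_congr_fun (measurableSet_Icc.prod mΛ)
        intro ξ hξ
        simp only [if_pos hξ.1.2]
      have hfiber : μ (Prod.fst ⁻¹' {tstar}) = 0 := by
        have hmap : μ (Prod.fst ⁻¹' {tstar}) = (μ.map Prod.fst) {tstar} :=
          (Measure.map_apply measurable_fst (measurableSet_singleton _)).symm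
        rw [hmap, hμ1, Measure.restrict_apply (measurableSet_singleton _)]
        exact measure_mono_null Set.inter_subset_left Real.volume_singleton
      have hint2 : ∫ ξ in Set.Ioc tstar τ ×ˢ Λ,
          h ((fun τ => if τ ≤ tstar then y τ else z τ) ξ.1) ξ.2 ∂μ
          = ∫ ξ in Set.Icc tstar τ ×ˢ Λ, h (z ξ.1) ξ.2 ∂μ := by
        rw [show (∫ ξ in Set.Ioc tstar τ ×ˢ Λ,
            h ((fun τ => if τ ≤ tstar then y τ else z τ) ξ.1) ξ.2 ∂μ)
            = ∫ ξ in Set.Ioc tstar τ ×ˢ Λ, h (z ξ.1) ξ.2 ∂μ from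
          setIntegral_congr_fun (measurableSet_Ioc.prod mΛ)
            (fun ξ hξ => by simp only [if_neg (not_le.2 hξ.1.1)])]
        apply setIntegral_congr_set
        rw [MeasureTheory.ae_eq_set]
        constructor
        · rw [Set.diff_eq_empty.2 (Set.prod_mono Set.Ioc_subset_Icc_self subset_rfl)]
          exact measure_empty
        · apply measure_mono_null (t := Prod.fst ⁻¹' {tstar}) _ hfiber
          rintro x ⟨⟨hx1, hx2⟩, hx3⟩
          have hne : x.1 ∉ Set.Ioc tstar τ := fun hmem => hx3 ⟨hmem, hx2⟩
          have hle : x.1 ≤ tstar := by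
            by_contra hgt
            exact hne ⟨not_le.1 hgt, hx1.2⟩
          exact le_antisymm hle hx1.1
      rw [hint1, hint2]
      have hy' : y tstar = xbar + ∫ ξ in Set.Icc t tstar ×ˢ Λ, h (y ξ.1) ξ.2 ∂σ :=
        hyf tstar ⟨h0ts, htstarϑ⟩ httstar
      have hz' : z τ = y tstar + ∫ ξ in Set.Icc tstar τ ×ˢ Λ, h (z ξ.1) ξ.2 ∂μ :=
        hzf τ hτ hsτ
      rw [hz', hy', add_assoc]
  -- backward equation
  · intro τ hτ hτt
    show (if τ ≤ tstar then y τ else z τ) = _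
    rw [if_pos (hτt.trans httstar), restr _ measurableSet_Icc,
      Set.inter_eq_left.2 (Set.Icc_subset_Icc hτ.1 httstar),
      show Set.Icc τ t ∩ Set.Ioc tstar ϑ = ∅ by
        apply Set.eq_empty_of_forall_notMem
        rintro x ⟨hx1, hx2⟩
        exact absurd (hx1.2.trans httstar) (not_le.2 hx2.1),
      Set.empty_prod, Measure.restrict_empty, add_zero]
    have hint : ∫ ξ in Set.Icc τ t ×ˢ Λ,
        h ((fun τ => if τ ≤ tstar then y τ else z τ) ξ.1) ξ.2 ∂σ
        = ∫ ξ in Set.Icc τ t ×ˢ Λ, h (y ξ.1) ξ.2 ∂σ := by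
      apply setIntegral_congr_fun (measurableSet_Icc.prod mΛ)
      intro ξ hξ
      simp only [if_pos (hξ.1.2.trans httstar)]
    rw [hint]
    exact hyb τ hτ hτt
end
end
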